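/- arXiv:1201.3503 — 2 statements merged into one kernel-verified Lean document; each statement's English description precedes it below -/
import Mathlib

section
/- Let X be a metric space with metric d_X, let A be a set with a probability measure μ, and let f, g: A → X be measurable maps such that d_B(δ_{f(x)}, δ_{g(x)}) < ε for every x ∈ A, where 0 < ε < 1 and d_B is the metric on measures built from a dense sequence {φ_k} ⊂ C_b(X) as d_B(μ₁,μ₂) = Σ_k 2^{−k}|⟨φ_k,μ₁−μ₂⟩|/(1+|⟨φ_k,μ₁−μ₂⟩|). Then d_B(f#μ, g#μ) ≤ C ε(|log ε| + 1) for a universal constant C. -/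
/-!
Write `D_k = ⟨φ_k, f#μ − g#μ⟩ = ∫ (φ_k ∘ f − φ_k ∘ g) dμ`. The `k`-th term of
`d_B(δ_{f(a)}, δ_{g(a)}) < ε` forces `|φ_k(f a) − φ_k(g a)| ≤ 2^{k+2} ε` as long as
`2^{k+2} ε ≤ 1`, and integrating gives the same bound for `|D_k|`. The terms of `d_B(f#μ, g#μ)`
with such `k` are therefore at most `2ε` each, and there are `K ≲ |log ε|` of them; the remaining
terms are bounded by the tail `2^{-K} < 4ε` of the geometric weights.
-/

open MeasureTheory

noncomputable section

/-- The metric on finite Borel measures built from a fixed dense sequence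
`φ : ℕ → C_b(X)`:
`d_B(P,Q) = ∑_k 2^{-k-1} |⟨φ_k, P−Q⟩|/(1 + |⟨φ_k, P−Q⟩|)`. -/
def dB {X : Type*} [TopologicalSpace X] [MeasurableSpace X]
    (φ : ℕ → BoundedContinuousFunction X ℝ) (P Q : Measure X) : ℝ :=
  ∑' k : ℕ, (2 : ℝ) ^ (-(k : ℤ) - 1) *
    (|(∫ x, φ k x ∂P) - ∫ x, φ k x ∂Q| /
      (1 + |(∫ x, φ k x ∂P) - ∫ x, φ k x ∂Q|))

lemma two_zpow_neg_natCast_sub_one (k : ℕ) : (2 : ℝ) ^ (-(k : ℤ) - 1) = 1 / 2 / 2 ^ k := by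
  rw [zpow_sub₀ two_ne_zero, zpow_neg, zpow_natCast, zpow_one]
  ring

lemma div_one_add_abs_le_one (t : ℝ) : |t| / (1 + |t|) ≤ 1 := by
  rw [div_le_one (by positivity)]
  linarith

lemma div_one_add_abs_le_abs (t : ℝ) : |t| / (1 + |t|) ≤ |t| :=
  div_le_self (abs_nonneg t) (by linarith [abs_nonneg t])

lemma abs_le_two_mul_of_div_one_add_abs_le {t c : ℝ} (h : |t| / (1 + |t|) ≤ c) (hc : c ≤ 1 / 2) :
    |t| ≤ 2 * c := by
  rw [div_le_iff₀ (by positivity)] at h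
  nlinarith [abs_nonneg t]

lemma dB_term_nonneg (c : ℝ) (k : ℕ) : 0 ≤ (2 : ℝ) ^ (-(k : ℤ) - 1) * (|c| / (1 + |c|)) := by
  positivity

lemma dB_term_le_geometric (c : ℝ) (k : ℕ) :
    (2 : ℝ) ^ (-(k : ℤ) - 1) * (|c| / (1 + |c|)) ≤ 1 / 2 / 2 ^ k := by
  rw [← two_zpow_neg_natCast_sub_one]
  exact mul_le_of_le_one_right (by positivity) (div_one_add_abs_le_one c)

lemma summable_dB_terms (c : ℕ → ℝ) :
    Summable fun k : ℕ => (2 : ℝ) ^ (-(k : ℤ) - 1) * (|c k| / (1 + |c k|)) :=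
  (summable_geometric_two' 1).of_nonneg_of_le (fun k => dB_term_nonneg _ k)
    (fun k => dB_term_le_geometric _ k)

lemma tsum_le_of_le_geometric {a : ℕ → ℝ} (h0 : ∀ k, 0 ≤ a k) (hgeom : ∀ k, a k ≤ 1 / 2 / 2 ^ k)
    {K : ℕ} {c : ℝ} (hhead : ∀ k < K, a k ≤ c) : ∑' k, a k ≤ K * c + 1 / 2 ^ K := by
  have ha : Summable a := (summable_geometric_two' 1).of_nonneg_of_le h0 hgeom
  have hsum_head : ∑ k ∈ Finset.range K, a k ≤ K * c := by
    simpa using Finset.sum_le_card_nsmul _ _ _ fun k hk => hhead k (Finset.mem_range.mp hk)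
  have htail : ∀ k, a (k + K) ≤ 1 / 2 ^ K / 2 / 2 ^ k := fun k =>
    (hgeom (k + K)).trans_eq (by rw [pow_add]; ring)
  have hsum_tail : ∑' k, a (k + K) ≤ 1 / 2 ^ K :=
    ((summable_nat_add_iff K).mpr ha |>.tsum_le_tsum htail (summable_geometric_two' _)).trans_eq
      (tsum_geometric_two' _)
  rw [← ha.sum_add_tsum_nat_add K]
  exact add_le_add hsum_head hsum_tail

lemma dB_le_of_abs_sub_integral_le {X : Type*} [TopologicalSpace X] [MeasurableSpace X]
    (φ : ℕ → BoundedContinuousFunction X ℝ) (P Q : Measure X) {K : ℕ} {c : ℝ}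
    (h : ∀ k < K, |(∫ x, φ k x ∂P) - ∫ x, φ k x ∂Q| ≤ 2 ^ (k + 1) * c) :
    dB φ P Q ≤ K * c + 1 / 2 ^ K := by
  refine tsum_le_of_le_geometric (fun k => dB_term_nonneg _ k) (fun k => dB_term_le_geometric _ k)
    fun k hk => ?_
  calc (2 : ℝ) ^ (-(k : ℤ) - 1) * (|(∫ x, φ k x ∂P) - ∫ x, φ k x ∂Q| /
          (1 + |(∫ x, φ k x ∂P) - ∫ x, φ k x ∂Q|))
      ≤ 1 / 2 / 2 ^ k * (2 ^ (k + 1) * c) := by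
        rw [two_zpow_neg_natCast_sub_one]
        gcongr
        exact (div_one_add_abs_le_abs _).trans (h k hk)
    _ = c := by rw [pow_succ]; field_simp

lemma dB_dirac {X : Type*} [TopologicalSpace X] [MeasurableSpace X] [MeasurableSingletonClass X]
    (φ : ℕ → BoundedContinuousFunction X ℝ) (x y : X) :
    dB φ (Measure.dirac x) (Measure.dirac y) =
      ∑' k : ℕ, (2 : ℝ) ^ (-(k : ℤ) - 1) * (|φ k x - φ k y| / (1 + |φ k x - φ k y|)) := by
  simp only [dB, integral_dirac]

lemma abs_sub_le_of_dB_dirac_lt {X : Type*} [TopologicalSpace X] [MeasurableSpace X]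
    [MeasurableSingletonClass X] (φ : ℕ → BoundedContinuousFunction X ℝ) {x y : X} {ε : ℝ}
    (h : dB φ (Measure.dirac x) (Measure.dirac y) < ε) {k : ℕ} (hk : 2 ^ (k + 2) * ε ≤ 1) :
    |φ k x - φ k y| ≤ 2 ^ (k + 2) * ε := by
  set t := φ k x - φ k y
  have hterm : 1 / 2 / 2 ^ k * (|t| / (1 + |t|)) < ε := by
    rw [← two_zpow_neg_natCast_sub_one]
    refine lt_of_le_of_lt ?_ h
    rw [dB_dirac]
    exact (summable_dB_terms fun j => φ j x - φ j y).le_tsum k fun j _ => dB_term_nonneg _ j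
  have hratio : |t| / (1 + |t|) ≤ 2 ^ (k + 1) * ε := by
    rw [pow_succ]
    have := hterm.le
    field_simp at this ⊢
    linarith
  calc |t| ≤ 2 * (2 ^ (k + 1) * ε) :=
        abs_le_two_mul_of_div_one_add_abs_le hratio (by rw [pow_succ] at hk; linarith)
    _ = 2 ^ (k + 2) * ε := by ring

lemma abs_integral_map_sub_integral_map_le {A X : Type*} [MeasurableSpace A] [TopologicalSpace X]
    [MeasurableSpace X] [OpensMeasurableSpace X] (μ : Measure A) [IsProbabilityMeasure μ]
    {f g : A → X} (hf : Measurable f) (hg : Measurable g) (ψ : BoundedContinuousFunction X ℝ)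
    {C : ℝ} (h : ∀ a, |ψ (f a) - ψ (g a)| ≤ C) :
    |(∫ x, ψ x ∂μ.map f) - ∫ x, ψ x ∂μ.map g| ≤ C := by
  have hψ : ∀ ν : Measure X, AEStronglyMeasurable ψ ν := fun _ => ψ.continuous.aestronglyMeasurable
  have hint : ∀ {u : A → X}, Measurable u → Integrable (fun a => ψ (u a)) μ := fun hu =>
    (integrable_map_measure (hψ _) hu.aemeasurable).mp (ψ.integrable _)
  rw [integral_map hf.aemeasurable (hψ _), integral_map hg.aemeasurable (hψ _),
    ← integral_sub (hint hf) (hint hg)]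
  simpa using norm_integral_le_of_norm_le_const (μ := μ)
    (Filter.Eventually.of_forall fun a => (Real.norm_eq_abs _).trans_le (h a))

lemma natCast_le_two_mul_abs_log {K : ℕ} {ε : ℝ} (hε : 0 < ε) (h : 2 ^ K * ε ≤ 1) :
    (K : ℝ) ≤ 2 * |Real.log ε| := by
  have hlog : K * Real.log 2 + Real.log ε ≤ 0 := by
    rw [← Real.log_pow, ← Real.log_mul (by positivity) hε.ne']
    exact Real.log_nonpos (by positivity) h
  have := Real.log_two_gt_d9
  nlinarith [neg_le_abs (Real.log ε), Nat.cast_nonneg (α := ℝ) K]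

lemma exists_cutoff_index {ε : ℝ} (hε : 0 < ε) (hε1 : ε < 1) :
    ∃ K : ℕ, (∀ k < K, 2 ^ (k + 2) * ε ≤ 1) ∧ 1 / 2 ^ K < 4 * ε ∧ (K : ℝ) ≤ 2 * |Real.log ε| := by
  classical
  have hex : ∃ n : ℕ, 1 < 2 ^ (n + 2) * ε := by
    obtain ⟨n, hn⟩ := pow_unbounded_of_one_lt (1 / ε) one_lt_two
    refine ⟨n, ?_⟩
    rw [div_lt_iff₀ hε] at hn
    nlinarith [pow_le_pow_right₀ (one_le_two (α := ℝ)) (Nat.le_add_right n 2)]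
  set K := Nat.find hex
  have hhead : ∀ k < K, 2 ^ (k + 2) * ε ≤ 1 := fun k hk => not_lt.mp (Nat.find_min hex hk)
  refine ⟨K, hhead, ?_, natCast_le_two_mul_abs_log hε ?_⟩
  · have := Nat.find_spec hex
    rw [pow_add] at this
    rw [div_lt_iff₀ (by positivity)]
    linarith
  · rcases hK : K with _ | m
    · simpa using hε1.le
    · have := hhead m (by omega)
      nlinarith [pow_succ (2 : ℝ) (m + 1)]

/-- There is a universal constant `C` such that if `f, g : A → X` satisfy
`d_B(δ_{f(x)}, δ_{g(x)}) < ε` pointwise for some `0 < ε < 1`, then the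
push-forward measures satisfy `d_B(f#μ, g#μ) ≤ C ε(|log ε| + 1)`. -/
theorem dB_pushforward_estimate :
    ∃ C : ℝ, 0 < C ∧
      ∀ (X : Type) [MetricSpace X] [MeasurableSpace X] [BorelSpace X]
        (φ : ℕ → BoundedContinuousFunction X ℝ)
        (A : Type) [MeasurableSpace A]
        (μ : Measure A) [IsProbabilityMeasure μ]
        (f g : A → X), Measurable f → Measurable g →
        ∀ ε : ℝ, 0 < ε → ε < 1 →
        (∀ a : A, dB φ (Measure.dirac (f a)) (Measure.dirac (g a)) < ε) →
        dB φ (μ.map f) (μ.map g) ≤ C * ε * (|Real.log ε| + 1) := by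
  refine ⟨4, by norm_num, ?_⟩
  intro X _ _ _ φ A _ μ _ f g hf hg ε hε hε1 hpt
  obtain ⟨K, hhead, htail, hK⟩ := exists_cutoff_index hε hε1
  have hD : ∀ k < K, |(∫ x, φ k x ∂μ.map f) - ∫ x, φ k x ∂μ.map g| ≤ 2 ^ (k + 1) * (2 * ε) :=
    fun k hk => abs_integral_map_sub_integral_map_le μ hf hg (φ k) fun a =>
      (abs_sub_le_of_dB_dirac_lt φ (hpt a) (hhead k hk)).trans_eq (by ring)
  calc dB φ (μ.map f) (μ.map g) ≤ K * (2 * ε) + 1 / 2 ^ K := dB_le_of_abs_sub_integral_le φ _ _ hD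
    _ ≤ 2 * |Real.log ε| * (2 * ε) + 4 * ε := by gcongr
    _ = 4 * ε * (|Real.log ε| + 1) := by ring

end
end

section
/- Let G ⊂ R^d be compact with |G| > 0 and lim_{ε→0} |(G + εx) △ G|/|G| = 0 for all x. Let X be Polish with a continuous d-parameter translation action θ, and let P be the weak limit of the probability measures P_ε = image of the normalized Lebesgue measure on G under x ↦ (x, θ_{x/ε} u_ε) for some family u_ε ∈ X, assuming the P_ε are tight. Then for any C¹ map λ: G → R^d, P is invariant under the map (x,u) ↦ (x, θ_{λ(x)} u). -/
/-!
For a constant shift `c`, testing `P_ε` against `g x * h (θ_c u)` amounts, since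
`θ_c θ_{x/ε} = θ_{(x + ε c)/ε}`, to translating the variable `x` by `ε c`; continuity of
translation in `L¹` makes the difference with the unshifted integral vanish as `ε → 0`, so the
weak limit `P` is invariant under `(x, u) ↦ (x, θ_c u)`. Since `(x, u) ↦ (x, θ_{λ x} u)` fixes
`x`, this invariance passes to simple `λ` one fibre of `λ` at a time, and then to measurable `λ`
by pointwise approximation and dominated convergence.
-/

open MeasureTheory Filter Topology BoundedContinuousFunction

section Translation

variable {E F : Type*} [NormedAddCommGroup E] [MeasurableSpace E] [BorelSpace E]
  [NormedAddCommGroup F] {μ : Measure E} [μ.IsAddRightInvariant]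

theorem abs_integral_mul_comp_add_sub_le {f : E → ℝ} (hf : Integrable f μ) (φ : E →ᵇ ℝ)
    (v : E) :
    |∫ a, f a * φ (a + v) ∂μ - ∫ a, f a * φ a ∂μ| ≤ ‖φ‖ * ∫ a, ‖f (a - v) - f a‖ ∂μ := by
  have hshift : ∫ a, f a * φ (a + v) ∂μ = ∫ a, f (a - v) * φ a ∂μ := by
    rw [← integral_sub_right_eq_self (fun a => f a * φ (a + v)) v]
    simp only [sub_add_cancel]
  have hφ : AEStronglyMeasurable φ μ := φ.continuous.aestronglyMeasurable
  have hφle : ∀ᵐ a ∂μ, ‖φ a‖ ≤ ‖φ‖ := .of_forall φ.norm_coe_le_norm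
  rw [hshift, ← integral_sub ((hf.comp_sub_right v).mul_bdd hφ hφle) (hf.mul_bdd hφ hφle),
    ← Real.norm_eq_abs, ← integral_const_mul]
  refine norm_integral_le_of_norm_le (((hf.comp_sub_right v).sub hf).norm.const_mul _)
    (.of_forall fun a => ?_)
  rw [← sub_mul, norm_mul, mul_comm]
  exact mul_le_mul_of_nonneg_right (φ.norm_coe_le_norm a) (norm_nonneg _)

theorem tendsto_integral_norm_comp_sub_sub [μ.InnerRegularCompactLTTop]
    [IsLocallyFiniteMeasure μ] {f : E → F} (hf : Integrable f μ) :
    Tendsto (fun v => ∫ a, ‖f (a - v) - f a‖ ∂μ) (𝓝 0) (𝓝 0) := by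
  let τ : C(E, C(E, E)) := ContinuousMap.curry ⟨fun p : E × E => p.2 - p.1, by fun_prop⟩
  have hτ (v : E) : MeasurePreserving (τ v) μ μ := measurePreserving_sub_right μ v
  have hlim := (tendsto_const_nhds (x := hf.toL1 f)).compMeasurePreservingLp
    (τ.continuous.tendsto 0) hτ (hτ 0) ENNReal.one_ne_top
  rw [tendsto_iff_norm_sub_tendsto_zero] at hlim
  refine hlim.congr fun v => ?_
  rw [L1.norm_eq_integral_norm]
  refine integral_congr_ae ?_
  have h0 (w : E) :
      Lp.compMeasurePreserving (τ w) (hτ w) (hf.toL1 f) =ᵐ[μ] fun a => f (a - w) := by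
    filter_upwards [Lp.coeFn_compMeasurePreserving (hf.toL1 f) (hτ w),
      (hτ w).quasiMeasurePreserving.ae_eq_comp hf.coeFn_toL1] with a h1 h2
    rw [h1]; exact h2
  filter_upwards [Lp.coeFn_sub (Lp.compMeasurePreserving (τ v) (hτ v) (hf.toL1 f))
      (Lp.compMeasurePreserving (τ 0) (hτ 0) (hf.toL1 f)), h0 v, h0 0] with a h1 h2 h3
  rw [h1, Pi.sub_apply, h2, h3, sub_zero]

end Translation

theorem MeasureTheory.SimpleFunc.sum_range_indicator_preimage_comp {α β E M : Type*}
    [MeasurableSpace α] [AddCommMonoid M] (ℓ : SimpleFunc α E) (g : β → α) (ψ : E → β → M)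
    (x : β) :
    ∑ c ∈ ℓ.range, ((fun y => ℓ (g y)) ⁻¹' {c}).indicator (ψ c) x = ψ (ℓ (g x)) x := by
  rw [Finset.sum_eq_single (ℓ (g x))]
  · simp
  · intro c _ hc
    exact Set.indicator_of_notMem (by simpa using hc.symm) _
  · exact absurd (ℓ.mem_range_self (g x))

def fiberAct {α E X : Type*} (θ : E → X → X) (f : α → E) (p : α × X) : α × X :=
  (p.1, θ (f p.1) p.2)

section FiberAct

variable {α E X : Type*} [MeasurableSpace α] [MeasurableSpace E] [MeasurableSpace X]
  {θ : E → X → X}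

theorem measurable_fiberAct (hθ : Measurable fun q : E × X => θ q.1 q.2) {f : α → E}
    (hf : Measurable f) : Measurable (fiberAct θ f) :=
  measurable_fst.prodMk (hθ.comp ((hf.comp measurable_fst).prodMk measurable_snd))

theorem map_fiberAct_simpleFunc_eq_self (hθ : Measurable fun q : E × X => θ q.1 q.2)
    {P : Measure (α × X)} (hP : ∀ c, P.map (fiberAct θ fun _ => c) = P) (ℓ : SimpleFunc α E) :
    P.map (fiberAct θ ℓ) = P := by
  refine Measure.ext_of_lintegral _ fun φ hφ => ?_
  set A : E → Set (α × X) := fun c => (fun p => ℓ p.1) ⁻¹' {c}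
  have hA (c : E) : MeasurableSet (A c) := measurable_fst (ℓ.measurableSet_fiber c)
  have hTc (c : E) : Measurable (fiberAct θ fun _ : α => c) :=
    measurable_fiberAct hθ measurable_const
  have hcomp (c : E) :
      (A c).indicator (φ ∘ fiberAct θ fun _ => c) = (A c).indicator φ ∘ fiberAct θ fun _ => c :=
    rfl
  calc ∫⁻ p, φ p ∂P.map (fiberAct θ ℓ)
      = ∫⁻ p, ∑ c ∈ ℓ.range, (A c).indicator (φ ∘ fiberAct θ fun _ => c) p ∂P := by
        rw [lintegral_map hφ (measurable_fiberAct hθ ℓ.measurable)]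
        simp_rw [A, ℓ.sum_range_indicator_preimage_comp Prod.fst]
        rfl
    _ = ∑ c ∈ ℓ.range, ∫⁻ p, (A c).indicator φ p ∂P.map (fiberAct θ fun _ => c) := by
        rw [lintegral_finsetSum _ fun c _ => (hφ.comp (hTc c)).indicator (hA c)]
        refine Finset.sum_congr rfl fun c _ => ?_
        rw [hcomp, lintegral_map (hφ.indicator (hA c)) (hTc c)]
        rfl
    _ = ∫⁻ p, φ p ∂P := by
        simp_rw [hP]
        rw [← lintegral_finsetSum _ fun c _ => hφ.indicator (hA c)]
        simp_rw [A, ℓ.sum_range_indicator_preimage_comp Prod.fst (fun _ => φ)]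

theorem map_fiberAct_eq_self [TopologicalSpace α] [BorelSpace α] [HasOuterApproxClosed α]
    [TopologicalSpace X] [BorelSpace X] [HasOuterApproxClosed X] [TopologicalSpace E]
    [TopologicalSpace.PseudoMetrizableSpace E] [SecondCountableTopology E]
    [OpensMeasurableSpace E]
    (hθ : Measurable fun q : E × X => θ q.1 q.2) (hθc : ∀ v, Continuous fun a => θ a v)
    {P : Measure (α × X)} [IsFiniteMeasure P] (hP : ∀ c, P.map (fiberAct θ fun _ => c) = P)
    {f : α → E} (hf : Measurable f) : P.map (fiberAct θ f) = P := by
  refine Measure.ext_of_integral_mul_boundedContinuousFunction fun g h => ?_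
  have hgh : Measurable fun p : α × X => g p.1 * h p.2 :=
    (g.continuous.measurable.comp measurable_fst).mul
      (h.continuous.measurable.comp measurable_snd)
  have hmap (k : α → E) (hk : Measurable k) :
      ∫ p, g p.1 * h p.2 ∂P.map (fiberAct θ k) = ∫ p, g p.1 * h (θ (k p.1) p.2) ∂P :=
    integral_map (measurable_fiberAct hθ hk).aemeasurable hgh.aestronglyMeasurable
  set ℓ := hf.stronglyMeasurable.approx
  have hℓ (k : ℕ) : ∫ p, g p.1 * h (θ (ℓ k p.1) p.2) ∂P = ∫ p, g p.1 * h p.2 ∂P := by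
    rw [← hmap _ (ℓ k).measurable, map_fiberAct_simpleFunc_eq_self hθ hP]
  have hlim : Tendsto (fun k => ∫ p, g p.1 * h (θ (ℓ k p.1) p.2) ∂P) atTop
      (𝓝 (∫ p, g p.1 * h (θ (f p.1) p.2) ∂P)) := by
    refine tendsto_integral_of_dominated_convergence (fun _ => ‖g‖ * ‖h‖)
      (fun k => (hgh.comp (measurable_fiberAct hθ (ℓ k).measurable)).aestronglyMeasurable)
      (integrable_const _) (fun k => .of_forall fun p => ?_) (.of_forall fun p => ?_)
    · rw [norm_mul]
      exact mul_le_mul (g.norm_coe_le_norm _) (h.norm_coe_le_norm _) (norm_nonneg _)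
        (norm_nonneg _)
    · exact tendsto_const_nhds.mul ((h.continuous.tendsto _).comp
        (((hθc p.2).tendsto _).comp (hf.stronglyMeasurable.tendsto_approx p.1)))
  rw [hmap f hf]
  exact tendsto_nhds_unique (hlim.congr hℓ) tendsto_const_nhds

end FiberAct

/-- `P_ε` of the paper: the law of `(x, θ_{x/ε} u)` for `x` uniform on `G`. -/
noncomputable def sampleMeasure {E X : Type*} [MeasurableSpace E] [SMul ℝ E] [MeasurableSpace X]
    (μ : Measure E) (G : Set E) (θ : E → X → X) (ε : ℝ) (u : X) : Measure (E × X) :=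
  ((μ G)⁻¹ • μ.restrict G).map fun a => (a, θ (ε⁻¹ • a) u)

section SampleMeasure

variable {E X : Type*} [NormedAddCommGroup E] [NormedSpace ℝ E] [MeasurableSpace E]
  [BorelSpace E] [TopologicalSpace X] [MeasurableSpace X] [BorelSpace X]
  {θ : E → X → X} {μ : Measure E} {G : Set E}

theorem integral_sampleMeasure {u : X} (hθu : Continuous fun a => θ a u) (ε : ℝ)
    {F : E × X → ℝ} (hF : Measurable F) :
    ∫ p, F p ∂sampleMeasure μ G θ ε u
      = (μ G)⁻¹.toReal * ∫ a in G, F (a, θ (ε⁻¹ • a) u) ∂μ := by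
  rw [sampleMeasure, integral_map _ hF.aestronglyMeasurable, integral_smul_measure,
    smul_eq_mul]
  exact (measurable_id.prodMk (hθu.comp (continuous_const_smul _)).measurable).aemeasurable

theorem abs_integral_sampleMeasure_shift_sub_le [μ.IsAddRightInvariant]
    (hθadd : ∀ a b v, θ a (θ b v) = θ (a + b) v) {u : X} (hθu : Continuous fun a => θ a u)
    {c : E} (hθc : Measurable (θ c)) {ε : ℝ} (hε : ε ≠ 0) (hG : MeasurableSet G) {g : E →ᵇ ℝ}
    (hg : Integrable (G.indicator g) μ) (h : X →ᵇ ℝ) :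
    |∫ p, g p.1 * h (θ c p.2) ∂sampleMeasure μ G θ ε u
        - ∫ p, g p.1 * h p.2 ∂sampleMeasure μ G θ ε u|
      ≤ (μ G)⁻¹.toReal * (‖h‖ * ∫ a, ‖G.indicator g (a - ε • c) - G.indicator g a‖ ∂μ) := by
  let φ : E →ᵇ ℝ :=
    h.compContinuous ⟨fun a => θ (ε⁻¹ • a) u, hθu.comp (continuous_const_smul _)⟩
  have hshift (a : E) : h (θ c (θ (ε⁻¹ • a) u)) = φ (a + ε • c) := by
    simp [φ, hθadd, smul_add, smul_smul, inv_mul_cancel₀ hε, add_comm]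
  have hindicator (ψ : E → ℝ) : ∫ a in G, g a * ψ a ∂μ = ∫ a, G.indicator g a * ψ a ∂μ := by
    rw [← integral_indicator hG]
    simp only [Set.indicator_mul_left]
  have hg₁ : Measurable fun p : E × X => g p.1 := g.continuous.measurable.comp measurable_fst
  rw [integral_sampleMeasure (F := fun p => g p.1 * h (θ c p.2)) hθu ε
      (hg₁.mul ((h.continuous.measurable.comp hθc).comp measurable_snd)),
    integral_sampleMeasure (F := fun p => g p.1 * h p.2) hθu ε
      (hg₁.mul (h.continuous.measurable.comp measurable_snd)),
    ← mul_sub, abs_mul, abs_of_nonneg ENNReal.toReal_nonneg]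
  refine mul_le_mul_of_nonneg_left ?_ ENNReal.toReal_nonneg
  simp only [hshift, hindicator]
  exact (abs_integral_mul_comp_add_sub_le hg φ (ε • c)).trans
    (mul_le_mul_of_nonneg_right (norm_compContinuous_le _ _)
      (integral_nonneg fun _ => norm_nonneg _))

theorem map_fiberAct_const_eq_self [HasOuterApproxClosed X] [μ.IsAddRightInvariant]
    [μ.InnerRegularCompactLTTop] [IsLocallyFiniteMeasure μ]
    (hθadd : ∀ a b v, θ a (θ b v) = θ (a + b) v) (hθcont₁ : ∀ v, Continuous fun a => θ a v)
    (hθcont₂ : ∀ a, Continuous (θ a)) (hG : MeasurableSet G) (hGμ : μ G ≠ ⊤)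
    {ε : ℕ → ℝ} (hε₀ : ∀ n, ε n ≠ 0) (hε : Tendsto ε atTop (𝓝 0)) (u : ℕ → X)
    {P : Measure (E × X)} [IsFiniteMeasure P]
    (hlim : ∀ F : E × X →ᵇ ℝ, Tendsto (fun n => ∫ p, F p ∂sampleMeasure μ G θ (ε n) (u n))
      atTop (𝓝 (∫ p, F p ∂P)))
    (c : E) : P.map (fiberAct θ fun _ => c) = P := by
  have hTc : Measurable (fiberAct θ fun _ : E => c) :=
    measurable_fst.prodMk ((hθcont₂ c).measurable.comp measurable_snd)
  refine Measure.ext_of_integral_mul_boundedContinuousFunction fun g h => ?_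
  have hgh : Measurable fun p : E × X => g p.1 * h p.2 :=
    (g.continuous.measurable.comp measurable_fst).mul
      (h.continuous.measurable.comp measurable_snd)
  rw [integral_map hTc.aemeasurable hgh.aestronglyMeasurable]
  let F₁ : E × X →ᵇ ℝ :=
    g.compContinuous .fst * h.compContinuous ((⟨θ c, hθcont₂ c⟩ : C(X, X)).comp .snd)
  let F₂ : E × X →ᵇ ℝ := g.compContinuous .fst * h.compContinuous .snd
  have : IsFiniteMeasure (μ.restrict G) := isFiniteMeasure_restrict.mpr hGμ
  have hg : Integrable (G.indicator g) μ := (integrable_indicator_iff hG).mpr (g.integrable _)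
  have hbound : Tendsto (fun n => (μ G)⁻¹.toReal *
      (‖h‖ * ∫ a, ‖G.indicator g (a - ε n • c) - G.indicator g a‖ ∂μ)) atTop (𝓝 0) := by
    have hεc : Tendsto (fun n => ε n • c) atTop (𝓝 0) := by
      simpa using hε.smul_const c
    simpa using (((tendsto_integral_norm_comp_sub_sub hg).comp hεc).const_mul ‖h‖).const_mul
      (μ G)⁻¹.toReal
  have hzero : Tendsto (fun n => ∫ p, F₁ p ∂sampleMeasure μ G θ (ε n) (u n)
      - ∫ p, F₂ p ∂sampleMeasure μ G θ (ε n) (u n)) atTop (𝓝 0) :=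
    squeeze_zero_norm (fun n => abs_integral_sampleMeasure_shift_sub_le hθadd (hθcont₁ (u n))
      (hθcont₂ c).measurable (hε₀ n) hG hg h) hbound
  exact sub_eq_zero.mp (tendsto_nhds_unique ((hlim F₁).sub (hlim F₂)) hzero)

end SampleMeasure

theorem limit_measure_T_lambda_invariant_general
    (d : ℕ) (X : Type*) [MetricSpace X]
    [MeasurableSpace X] [BorelSpace X]
    (θ : (Fin d → ℝ) → X → X)
    (hθadd : ∀ (a b : Fin d → ℝ) (v : X), θ a (θ b v) = θ (a + b) v)
    (hθcont₁ : ∀ v : X, Continuous fun a => θ a v)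
    (hθcont₂ : ∀ a : Fin d → ℝ, Continuous (θ a))
    (hθmeas : Measurable fun q : (Fin d → ℝ) × X => θ q.1 q.2)
    (G : Set (Fin d → ℝ)) (hGc : IsCompact G)
    (ε : ℕ → ℝ) (hεpos : ∀ n, 0 < ε n) (hε : Tendsto ε atTop (nhds 0))
    (u : ℕ → X)
    (P : Measure ((Fin d → ℝ) × X)) [IsProbabilityMeasure P]
    (hlim : ∀ f : BoundedContinuousFunction ((Fin d → ℝ) × X) ℝ,
      Tendsto (fun n => ∫ p, f p ∂(Measure.map
          (fun a : Fin d → ℝ => (a, θ ((ε n)⁻¹ • a) (u n)))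
          ((volume G)⁻¹ • volume.restrict G)))
        atTop (nhds (∫ p, f p ∂P)))
    (lam : (Fin d → ℝ) → (Fin d → ℝ))
    (hlammeas : Measurable lam) :
    Measure.map (fun p : (Fin d → ℝ) × X => (p.1, θ (lam p.1) p.2)) P = P :=
  map_fiberAct_eq_self hθmeas hθcont₁
    (map_fiberAct_const_eq_self hθadd hθcont₁ hθcont₂ hGc.measurableSet hGc.measure_lt_top.ne
      (fun n => (hεpos n).ne') hε u hlim) hlammeas

/-- If `P` is the weak limit of the push-forwards `P_ε` of the normalized
Lebesgue measure on a compact set `G` under `x ↦ (x, θ_{x/ε} u_ε)`, where `θ` is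
a continuous `d`-parameter group of translations acting on a Polish space `X`
and `G` satisfies `|(G+εx) △ G|/|G| → 0`, then `P` is invariant under
`(x,u) ↦ (x, θ_{λ(x)} u)` for every `C¹` map `λ`. -/
theorem limit_measure_T_lambda_invariant
    (d : ℕ) (X : Type*) [MetricSpace X]
    [TopologicalSpace.SeparableSpace X] [CompleteSpace X]
    [MeasurableSpace X] [BorelSpace X]
    (θ : (Fin d → ℝ) → X → X)
    (hθadd : ∀ (a b : Fin d → ℝ) (v : X), θ a (θ b v) = θ (a + b) v)
    (hθzero : ∀ v : X, θ 0 v = v)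
    (hθcont₁ : ∀ v : X, Continuous fun a => θ a v)
    (hθcont₂ : ∀ a : Fin d → ℝ, Continuous (θ a))
    (hθmeas : Measurable fun q : (Fin d → ℝ) × X => θ q.1 q.2)
    (G : Set (Fin d → ℝ)) (hGc : IsCompact G) (hGpos : 0 < volume G)
    (hGsym : ∀ x : Fin d → ℝ,
      Tendsto (fun ε : ℝ =>
          volume (symmDiff ((fun y => y + ε • x) '' G) G))
        (nhds 0) (nhds 0))
    (ε : ℕ → ℝ) (hεpos : ∀ n, 0 < ε n) (hε : Tendsto ε atTop (nhds 0))
    (u : ℕ → X)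
    (P : Measure ((Fin d → ℝ) × X)) [IsProbabilityMeasure P]
    (hlim : ∀ f : BoundedContinuousFunction ((Fin d → ℝ) × X) ℝ,
      Tendsto (fun n => ∫ p, f p ∂(Measure.map
          (fun a : Fin d → ℝ => (a, θ ((ε n)⁻¹ • a) (u n)))
          ((volume G)⁻¹ • volume.restrict G)))
        atTop (nhds (∫ p, f p ∂P)))
    (lam : (Fin d → ℝ) → (Fin d → ℝ))
    (hlam : ContDiffOn ℝ 1 lam G) (hlammeas : Measurable lam) :
    Measure.map (fun p : (Fin d → ℝ) × X => (p.1, θ (lam p.1) p.2)) P = P :=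
  limit_measure_T_lambda_invariant_general d X θ hθadd hθcont₁ hθcont₂ hθmeas G hGc ε hεpos hε u P
    hlim lam hlammeas
end
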